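/- arXiv:2006.06573 — 2 statements merged into one kernel-verified Lean document; each statement's English description precedes it below -/
import Mathlib

section
/- For the fully connected graph G_data with Gaussian weights w(i,j) = exp(−‖I(i)−I(j)‖²/(2σ²)) on pixel appearance vectors I(i) ∈ ℝ^d, the cut value satisfies cut(A,B|G_data) = (2πσ²)^{d/2} |A| |B| ⟨g_A, g_B⟩, where g_S(c) = (1/|S|) Σ_{i∈S} K_{σ²}(I(i)−c) is the kernel density estimate with Gaussian kernel K_{σ²}(u) = (πσ²)^{−d/2} exp(−‖u‖²/σ²), and ⟨·,·⟩ is the L² inner product on ℝ^d. -/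
open Real MeasureTheory Finset

/-!
Completing the square (Apollonius' theorem) writes the product of two Gaussians of variance
parameter `s` centred at `x` and `y` as `exp (-‖x - y‖² / (2s))` times a Gaussian of parameter
`s / 2` centred at the midpoint, whose integral is `(π s / 2) ^ (d / 2)`. Expanding the product
of the two kernel density estimates into a double sum and integrating termwise, the
normalising constants cancel.
-/

section Gaussian

variable {E : Type*} [NormedAddCommGroup E] [InnerProductSpace ℝ E]

lemma exp_mul_exp_eq_exp_mul_exp_midpoint (s : ℝ) (x y c : E) :
    exp (-‖x - c‖ ^ 2 / s) * exp (-‖y - c‖ ^ 2 / s) =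
      exp (-‖x - y‖ ^ 2 / (2 * s)) * exp (-(2 / s) * ‖c - midpoint ℝ x y‖ ^ 2) := by
  have apollonius :=
    EuclideanGeometry.dist_sq_add_dist_sq_eq_two_mul_dist_midpoint_sq_add_half_dist_sq c x y
  rw [dist_eq_norm, dist_eq_norm, dist_eq_norm, dist_eq_norm] at apollonius
  rw [← exp_add, ← exp_add, norm_sub_rev x c, norm_sub_rev y c]
  congr 1
  linear_combination (-s⁻¹) * apollonius

variable [FiniteDimensional ℝ E] [MeasurableSpace E] [BorelSpace E]

lemma integral_exp_mul_exp {s : ℝ} (hs : 0 < s) (x y : E) :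
    ∫ c : E, exp (-‖x - c‖ ^ 2 / s) * exp (-‖y - c‖ ^ 2 / s) =
      (π * s / 2) ^ (Module.finrank ℝ E / 2 : ℝ) * exp (-‖x - y‖ ^ 2 / (2 * s)) := by
  simp_rw [exp_mul_exp_eq_exp_mul_exp_midpoint s x y]
  rw [integral_const_mul, integral_sub_right_eq_self (fun c => exp (-(2 / s) * ‖c‖ ^ 2)),
    GaussianFourier.integral_rexp_neg_mul_sq_norm (by positivity), mul_comm]
  congr 2
  field_simp

lemma integrable_exp_mul_exp {s : ℝ} (hs : 0 < s) (x y : E) :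
    Integrable fun c : E => exp (-‖x - c‖ ^ 2 / s) * exp (-‖y - c‖ ^ 2 / s) :=
  .of_integral_ne_zero <| by rw [integral_exp_mul_exp hs]; positivity

end Gaussian

lemma integral_sum_mul_sum {α ι κ 𝕜 : Type*} [MeasurableSpace α] {μ : Measure α} [RCLike 𝕜]
    (s : Finset ι) (t : Finset κ) (f : ι → α → 𝕜) (g : κ → α → 𝕜)
    (hfg : ∀ i ∈ s, ∀ j ∈ t, Integrable (fun a => f i a * g j a) μ) :
    ∫ a, (∑ i ∈ s, f i a) * (∑ j ∈ t, g j a) ∂μ = ∑ i ∈ s, ∑ j ∈ t, ∫ a, f i a * g j a ∂μ := by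
  simp_rw [sum_mul_sum]
  rw [integral_finsetSum _ fun i hi => integrable_finsetSum _ (hfg i hi)]
  exact sum_congr rfl fun i hi => integral_finsetSum _ (hfg i hi)

lemma two_mul_rpow_mul_div_two_rpow_mul_rpow_neg_sq {a : ℝ} (ha : 0 < a) (r : ℝ) :
    (2 * a) ^ r * (a / 2) ^ r * (a ^ (-r)) ^ 2 = 1 := by
  rw [← mul_rpow (by positivity) (by positivity), show 2 * a * (a / 2) = a ^ 2 by ring,
    ← rpow_pow_comm ha.le, rpow_neg ha.le, inv_pow, mul_inv_cancel₀ (by positivity)]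

theorem dense_cut_eq_kde_inner_general (d : ℕ) (V : Type*)
    (I : V → EuclideanSpace ℝ (Fin d)) (σ : ℝ) (hσ : 0 < σ)
    (A B : Finset V) (hA : A.Nonempty) (hB : B.Nonempty)
    (w : V → V → ℝ) (hw : ∀ i j, w i j = Real.exp (-‖I i - I j‖^2 / (2 * σ^2)))
    (g : Finset V → EuclideanSpace ℝ (Fin d) → ℝ)
    (hg : ∀ S c, g S c = (1 / (S.card : ℝ)) *
        ∑ i ∈ S, (π * σ^2) ^ (-(d:ℝ)/2) * Real.exp (-‖I i - c‖^2 / σ^2)) :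
    ∑ i ∈ A, ∑ j ∈ B, w i j =
      (2 * π * σ^2) ^ ((d:ℝ)/2) * (A.card : ℝ) * (B.card : ℝ) *
        ∫ c : EuclideanSpace ℝ (Fin d), g A c * g B c := by
  set K := (π * σ ^ 2) ^ (-(d : ℝ) / 2)
  set e : V → EuclideanSpace ℝ (Fin d) → ℝ := fun i c => exp (-‖I i - c‖ ^ 2 / σ ^ 2)
  have hσ2 : 0 < σ ^ 2 := by positivity
  have kde_mul_kde : ∀ c, g A c * g B c =
      K ^ 2 / (#A * #B) * ((∑ i ∈ A, e i c) * ∑ j ∈ B, e j c) := by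
    intro c; rw [hg, hg, ← mul_sum, ← mul_sum]; ring
  have integral_kde_mul_kde : ∫ c, g A c * g B c =
      K ^ 2 / (#A * #B) * (π * σ ^ 2 / 2) ^ ((d : ℝ) / 2) * ∑ i ∈ A, ∑ j ∈ B, w i j := by
    simp_rw [kde_mul_kde, integral_const_mul,
      integral_sum_mul_sum A B e e fun i _ j _ => integrable_exp_mul_exp hσ2 _ _, e,
      integral_exp_mul_exp hσ2, finrank_euclideanSpace_fin, hw, mul_sum, mul_assoc]
  have hconst := two_mul_rpow_mul_div_two_rpow_mul_rpow_neg_sq (a := π * σ ^ 2)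
    (by positivity) ((d : ℝ) / 2)
  rw [← neg_div, ← mul_assoc] at hconst
  have hA0 : (#A : ℝ) ≠ 0 := by exact_mod_cast hA.card_pos.ne'
  have hB0 : (#B : ℝ) ≠ 0 := by exact_mod_cast hB.card_pos.ne'
  rw [integral_kde_mul_kde]
  calc ∑ i ∈ A, ∑ j ∈ B, w i j
      = (2 * π * σ ^ 2) ^ ((d : ℝ) / 2) * (π * σ ^ 2 / 2) ^ ((d : ℝ) / 2) * K ^ 2 *
          ∑ i ∈ A, ∑ j ∈ B, w i j := by rw [hconst, one_mul]
    _ = _ := by field_simp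

theorem dense_cut_eq_kde_inner (d : ℕ) (V : Type*) [Fintype V] [DecidableEq V]
    (I : V → EuclideanSpace ℝ (Fin d)) (σ : ℝ) (hσ : 0 < σ)
    (A B : Finset V) (hA : A.Nonempty) (hB : B.Nonempty)
    (hdisj : Disjoint A B) (hcover : A ∪ B = Finset.univ)
    (w : V → V → ℝ) (hw : ∀ i j, w i j = Real.exp (-‖I i - I j‖^2 / (2 * σ^2)))
    (g : Finset V → EuclideanSpace ℝ (Fin d) → ℝ)
    (hg : ∀ S c, g S c = (1 / (S.card : ℝ)) *
        ∑ i ∈ S, (π * σ^2) ^ (-(d:ℝ)/2) * Real.exp (-‖I i - c‖^2 / σ^2)) :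
    ∑ i ∈ A, ∑ j ∈ B, w i j =
      (2 * π * σ^2) ^ ((d:ℝ)/2) * (A.card : ℝ) * (B.card : ℝ) *
        ∫ c : EuclideanSpace ℝ (Fin d), g A c * g B c :=
  dense_cut_eq_kde_inner_general d V I σ hσ A B hA hB w hw g hg
end

section
/- With Gaussian appearance weights, ncut(A,B|G_data) = ⟨g_V, g_V⟩ · ⟨g_A, g_B⟩ / (⟨g_A, g_V⟩ · ⟨g_B, g_V⟩) for any partition (A,B) of V with A, B nonempty. -/
/-!
Completing the square (Apollonius' identity) turns the product of the two Gaussians centred at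
`a` and `b` into `exp (-‖a - b‖² / (2σ²))` times a Gaussian centred at the midpoint, whose
integral does not depend on `a` and `b`. Hence `⟨g_S, g_T⟩` equals the graph weight
`∑_{i ∈ S, j ∈ T} w i j` times a constant depending only on `σ`, `d`, `|S|` and `|T|`, and these
constants cancel in the ratio.
-/

open Real MeasureTheory Finset Module

section Gaussian

variable {F : Type*} [NormedAddCommGroup F] [InnerProductSpace ℝ F]

lemma exp_neg_sq_norm_sub_mul_exp_neg_sq_norm_sub {σ : ℝ} (hσ : σ ≠ 0) (a b x : F) :
    exp (-‖a - x‖ ^ 2 / σ ^ 2) * exp (-‖b - x‖ ^ 2 / σ ^ 2) =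
      exp (-‖a - b‖ ^ 2 / (2 * σ ^ 2)) * exp (-(2 / σ ^ 2) * ‖x - midpoint ℝ a b‖ ^ 2) := by
  have h := EuclideanGeometry.dist_sq_add_dist_sq_eq_two_mul_dist_midpoint_sq_add_half_dist_sq x a b
  simp only [dist_eq_norm] at h
  rw [norm_sub_rev a x, norm_sub_rev b x, ← exp_add, ← exp_add]
  congr 1
  field_simp
  linear_combination (-2) * h

section FiniteDimensional

variable [FiniteDimensional ℝ F] [MeasurableSpace F] [BorelSpace F]

lemma integrable_exp_neg_mul_sq_norm {b : ℝ} (hb : 0 < b) :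
    Integrable (fun v : F => exp (-b * ‖v‖ ^ 2)) :=
  Integrable.of_integral_ne_zero <| by
    rw [GaussianFourier.integral_rexp_neg_mul_sq_norm hb]
    positivity

lemma integrable_exp_neg_sq_norm_sub_mul_exp_neg_sq_norm_sub {σ : ℝ} (hσ : σ ≠ 0) (a b : F) :
    Integrable (fun x : F => exp (-‖a - x‖ ^ 2 / σ ^ 2) * exp (-‖b - x‖ ^ 2 / σ ^ 2)) := by
  simp_rw [exp_neg_sq_norm_sub_mul_exp_neg_sq_norm_sub hσ]
  exact ((integrable_exp_neg_mul_sq_norm (by positivity)).comp_sub_right _).const_mul _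

lemma integral_exp_neg_sq_norm_sub_mul_exp_neg_sq_norm_sub {σ : ℝ} (hσ : σ ≠ 0) (a b : F) :
    ∫ x, exp (-‖a - x‖ ^ 2 / σ ^ 2) * exp (-‖b - x‖ ^ 2 / σ ^ 2) =
      (π * σ ^ 2 / 2) ^ (finrank ℝ F / 2 : ℝ) * exp (-‖a - b‖ ^ 2 / (2 * σ ^ 2)) := by
  simp_rw [exp_neg_sq_norm_sub_mul_exp_neg_sq_norm_sub hσ]
  rw [integral_const_mul, integral_sub_right_eq_self (fun x : F => exp (-(2 / σ ^ 2) * ‖x‖ ^ 2)),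
    GaussianFourier.integral_rexp_neg_mul_sq_norm (by positivity), mul_comm]
  congr 2
  field_simp

lemma integral_sum_gaussian_mul_sum_gaussian {ι : Type*} {σ : ℝ} (hσ : σ ≠ 0) (K : ℝ)
    (x : ι → F) (S T : Finset ι) :
    ∫ c, (∑ i ∈ S, K * exp (-‖x i - c‖ ^ 2 / σ ^ 2)) * ∑ j ∈ T, K * exp (-‖x j - c‖ ^ 2 / σ ^ 2) =
      K ^ 2 * (π * σ ^ 2 / 2) ^ (finrank ℝ F / 2 : ℝ) *
        ∑ i ∈ S, ∑ j ∈ T, exp (-‖x i - x j‖ ^ 2 / (2 * σ ^ 2)) := by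
  simp_rw [sum_mul_sum, mul_mul_mul_comm K _ K]
  rw [integral_finsetSum _ fun i _ => integrable_finsetSum _ fun j _ =>
    (integrable_exp_neg_sq_norm_sub_mul_exp_neg_sq_norm_sub hσ _ _).const_mul _]
  simp_rw [mul_sum]
  refine sum_congr rfl fun i _ => ?_
  rw [integral_finsetSum _ fun j _ =>
    (integrable_exp_neg_sq_norm_sub_mul_exp_neg_sq_norm_sub hσ _ _).const_mul _]
  refine sum_congr rfl fun j _ => ?_
  rw [integral_const_mul, integral_exp_neg_sq_norm_sub_mul_exp_neg_sq_norm_sub hσ]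
  ring

end FiniteDimensional

end Gaussian

theorem dense_ncut_eq_kde_general (d : ℕ) (V : Type*) [Fintype V]
    (I : V → EuclideanSpace ℝ (Fin d)) (σ : ℝ) (hσ : 0 < σ)
    (A B : Finset V) (hA : A.Nonempty) (hB : B.Nonempty)
    (w : V → V → ℝ) (hw : ∀ i j, w i j = Real.exp (-‖I i - I j‖^2 / (2 * σ^2)))
    (g : Finset V → EuclideanSpace ℝ (Fin d) → ℝ)
    (hg : ∀ T c, g T c = (1 / (T.card : ℝ)) *
        ∑ i ∈ T, (π * σ^2) ^ (-(d:ℝ)/2) * Real.exp (-‖I i - c‖^2 / σ^2))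
    (cut : ℝ) (hcut : cut = ∑ i ∈ A, ∑ j ∈ B, w i j)
    (vol : Finset V → ℝ) (hvol : ∀ T, vol T = ∑ i ∈ T, ∑ j ∈ Finset.univ, w i j) :
    vol Finset.univ * cut / (vol A * vol B) =
      (∫ c : EuclideanSpace ℝ (Fin d), g Finset.univ c * g Finset.univ c) *
        (∫ c : EuclideanSpace ℝ (Fin d), g A c * g B c) /
      ((∫ c : EuclideanSpace ℝ (Fin d), g A c * g Finset.univ c) *
       (∫ c : EuclideanSpace ℝ (Fin d), g B c * g Finset.univ c)) := by
  set κ := ((π * σ ^ 2) ^ (-(d : ℝ) / 2)) ^ 2 * (π * σ ^ 2 / 2) ^ (d / 2 : ℝ)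
  have hκ : 0 < κ := by positivity
  have inner_kde : ∀ S T, ∫ c, g S c * g T c =
      1 / (S.card : ℝ) * (1 / T.card) * (κ * ∑ i ∈ S, ∑ j ∈ T, w i j) := fun S T => by
    simp_rw [hg, mul_mul_mul_comm (1 / (S.card : ℝ)), hw]
    rw [integral_const_mul, integral_sum_gaussian_mul_sum_gaussian hσ.ne',
      finrank_euclideanSpace_fin]
  have weight_pos : ∀ S T : Finset V, S.Nonempty → T.Nonempty → 0 < ∑ i ∈ S, ∑ j ∈ T, w i j :=
    fun S T hS hT => sum_pos (fun i _ => sum_pos (fun j _ => by rw [hw]; positivity) hT) hS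
  have hV : (univ : Finset V).Nonempty := hA.mono (subset_univ A)
  have hWA := weight_pos A univ hA hV
  have hWB := weight_pos B univ hB hV
  have hcardA := hA.card_pos
  have hcardB := hB.card_pos
  have hcardV := hV.card_pos
  rw [inner_kde, inner_kde, inner_kde, inner_kde, hcut, hvol, hvol, hvol]
  field_simp

theorem dense_ncut_eq_kde (d : ℕ) (V : Type*) [Fintype V] [DecidableEq V]
    (I : V → EuclideanSpace ℝ (Fin d)) (σ : ℝ) (hσ : 0 < σ)
    (A B : Finset V) (hA : A.Nonempty) (hB : B.Nonempty)
    (hdisj : Disjoint A B) (hcover : A ∪ B = Finset.univ)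
    (w : V → V → ℝ) (hw : ∀ i j, w i j = Real.exp (-‖I i - I j‖^2 / (2 * σ^2)))
    (g : Finset V → EuclideanSpace ℝ (Fin d) → ℝ)
    (hg : ∀ T c, g T c = (1 / (T.card : ℝ)) *
        ∑ i ∈ T, (π * σ^2) ^ (-(d:ℝ)/2) * Real.exp (-‖I i - c‖^2 / σ^2))
    (cut : ℝ) (hcut : cut = ∑ i ∈ A, ∑ j ∈ B, w i j)
    (vol : Finset V → ℝ) (hvol : ∀ T, vol T = ∑ i ∈ T, ∑ j ∈ Finset.univ, w i j) :
    vol Finset.univ * cut / (vol A * vol B) =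
      (∫ c : EuclideanSpace ℝ (Fin d), g Finset.univ c * g Finset.univ c) *
        (∫ c : EuclideanSpace ℝ (Fin d), g A c * g B c) /
      ((∫ c : EuclideanSpace ℝ (Fin d), g A c * g Finset.univ c) *
       (∫ c : EuclideanSpace ℝ (Fin d), g B c * g Finset.univ c)) :=
  dense_ncut_eq_kde_general d V I σ hσ A B hA hB w hw g hg cut hcut vol hvol
end
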